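/- For positive integers s, a, t and rank r, D(Z_{s^a}^{r−1} ⊕ Z_{s^a t}) ≤ D(Z_{s^a}^r) · t. -/

import Mathlib

/-!
With `q = s ^ a`, the map `(v, x) ↦ (x mod q, v)` from `ℤ_q^(r-1) ⊕ ℤ_{qt}` onto `ℤ_q^r` has a
kernel of order `t`, so the theorem is an instance of `D(G) ≤ D(G') · D(ker φ)` for a homomorphism
`φ : G → G'`. From a sequence of length `D(G') · D(ker φ)`, greedily split off `D(ker φ)` disjoint
nonempty subsequences, each of length at most `D(G')`, whose sums lie in `ker φ`; some nonempty
subfamily of these sums adds up to zero, and the union of that subfamily is a zero-sum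
subsequence. Finally `D(ker φ) ≤ |ker φ|` by the pigeonhole principle on prefix sums.
-/

/-- The Davenport constant: the smallest `d` such that every multiset of `d`
elements of `G` contains a nonempty zero-sum sub-multiset. -/
noncomputable def davenport (G : Type*) [AddCommGroup G] : ℕ :=
  sInf {d | ∀ S : Multiset G, Multiset.card S = d →
    ∃ T, T ≤ S ∧ T ≠ 0 ∧ T.sum = 0}

namespace Multiset

variable {α β : Type*}

theorem exists_le_card_eq {s : Multiset α} {n : ℕ} (h : n ≤ card s) :
    ∃ t ≤ s, card t = n := by
  obtain ⟨t, ht⟩ := card_pos_iff_exists_mem.mp <| by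
    rw [card_powersetCard]; exact Nat.choose_pos h
  exact ⟨t, mem_powersetCard.mp ht⟩

theorem exists_le_map_eq_of_le_map (f : α → β) {s : Multiset α} {t : Multiset β}
    (h : t ≤ s.map f) : ∃ u ≤ s, u.map f = t := by
  classical
  induction s using Multiset.induction_on generalizing t with
  | empty => exact ⟨0, le_rfl, by simp_all⟩
  | cons a s ih =>
    rw [map_cons] at h
    by_cases ha : f a ∈ t
    · obtain ⟨u, hu, hmap⟩ := ih (by simpa using erase_le_erase (f a) h)
      exact ⟨a ::ₘ u, cons_le_cons a hu, by rw [map_cons, hmap, cons_erase ha]⟩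
    · obtain ⟨u, hu, rfl⟩ := ih ((le_cons_of_notMem ha).mp h)
      exact ⟨u, hu.trans (le_cons_self s a), rfl⟩

end Multiset

open Multiset

section Davenport

variable {G G' : Type*} [AddCommGroup G] [AddCommGroup G']

theorem exists_zero_sum_of_card_le [Finite G] (S : Multiset G) (hS : Nat.card G ≤ card S) :
    ∃ T ≤ S, T ≠ 0 ∧ T.sum = 0 := by
  set l := S.toList
  have hl : l.length = card S := length_toList S
  obtain ⟨i, j, hij, hsum⟩ : ∃ i j : Fin (l.length + 1), i < j ∧
      (l.take i).sum = (l.take j).sum := by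
    have : ¬ Function.Injective fun j : Fin (l.length + 1) => (l.take j).sum := fun hinj => by
      have := Nat.card_le_card_of_injective _ hinj
      simp only [Nat.card_eq_fintype_card, Fintype.card_fin] at this
      omega
    simp only [Function.Injective, not_forall] at this
    obtain ⟨i, j, hsum, hne⟩ := this
    rcases lt_or_gt_of_ne hne with h | h
    exacts [⟨i, j, h, hsum⟩, ⟨j, i, h, hsum.symm⟩]
  refine ⟨((l.take j).drop i : List G), ?_, ?_, ?_⟩
  · rw [← coe_toList S, coe_le]
    exact ((List.drop_sublist _ _).trans (List.take_sublist _ _)).subperm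
  · rw [Ne, coe_eq_zero, ← List.length_eq_zero_iff, List.length_drop, List.length_take]
    omega
  · have := List.sum_take_add_sum_drop (l.take j) i
    rw [List.take_take, Nat.min_eq_left hij.le, hsum] at this
    simpa using this

theorem davenport_le_card [Finite G] : davenport G ≤ Nat.card G :=
  Nat.sInf_le fun S hS => exists_zero_sum_of_card_le S hS.ge

theorem exists_zero_sum_of_davenport_le [Finite G] {S : Multiset G}
    (hS : davenport G ≤ card S) :
    ∃ T ≤ S, T ≠ 0 ∧ card T ≤ davenport G ∧ T.sum = 0 := by
  have hmem : davenport G ∈ {d | ∀ S : Multiset G, card S = d →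
      ∃ T, T ≤ S ∧ T ≠ 0 ∧ T.sum = 0} :=
    Nat.sInf_mem ⟨_, fun S hS => exists_zero_sum_of_card_le S hS.ge⟩
  obtain ⟨S₀, hS₀, hcard⟩ := exists_le_card_eq hS
  obtain ⟨T, hT, hT0, hsum⟩ := hmem S₀ hcard
  exact ⟨T, hT.trans hS₀, hT0, hcard ▸ card_le_card hT, hsum⟩

theorem AddSubgroup.exists_zero_sum_of_davenport_le (K : AddSubgroup G) [Finite K]
    {M : Multiset G} (hMK : ∀ x ∈ M, x ∈ K) (hM : davenport K ≤ card M) :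
    ∃ N ≤ M, N ≠ 0 ∧ N.sum = 0 := by
  lift M to Multiset K using hMK
  obtain ⟨N, hN, hN0, -, hsum⟩ := _root_.exists_zero_sum_of_davenport_le (by simpa using hM)
  refine ⟨N.map (↑), map_le_map hN, by simpa using hN0, ?_⟩
  simpa [hsum] using (map_multiset_sum K.subtype N).symm

namespace AddMonoidHom

variable (φ : G →+ G')

theorem card_ker_mul_card_of_surjective (hφ : Function.Surjective φ) :
    Nat.card φ.ker * Nat.card G' = Nat.card G := by
  rw [← φ.ker.card_mul_index, AddSubgroup.index_ker, range_eq_top.mpr hφ, AddSubgroup.card_top]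

variable [Finite G']

theorem exists_sum_mem_ker_of_davenport_le {S : Multiset G} (hS : davenport G' ≤ card S) :
    ∃ T ≤ S, T ≠ 0 ∧ card T ≤ davenport G' ∧ T.sum ∈ φ.ker := by
  obtain ⟨T', hT', hT'0, hcard, hsum⟩ :=
    exists_zero_sum_of_davenport_le (S := S.map φ) (by rwa [card_map])
  obtain ⟨T, hT, rfl⟩ := exists_le_map_eq_of_le_map φ hT'
  refine ⟨T, hT, by simpa using hT'0, by simpa using hcard, ?_⟩
  rw [mem_ker, map_multiset_sum, hsum]

theorem exists_disjoint_sum_mem_ker (k : ℕ) {S : Multiset G} (hS : davenport G' * k ≤ card S) :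
    ∃ P : Multiset (Multiset G), card P = k ∧ (∀ T ∈ P, T ≠ 0 ∧ T.sum ∈ φ.ker) ∧ P.sum ≤ S := by
  classical
  induction k generalizing S with
  | zero => exact ⟨0, rfl, by simp, by simp⟩
  | succ k ih =>
    obtain ⟨T, hTS, hT0, hcard, hT⟩ :=
      φ.exists_sum_mem_ker_of_davenport_le (S := S) (by nlinarith)
    obtain ⟨P, hPk, hP, hPS⟩ := ih (S := S - T) (by rw [card_sub hTS]; grind)
    refine ⟨T ::ₘ P, by simp [hPk], ?_, ?_⟩
    · exact forall_mem_cons.mpr ⟨⟨hT0, hT⟩, hP⟩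
    · rw [sum_cons]
      exact (le_tsub_iff_left hTS).mp hPS

theorem davenport_le_mul_davenport_ker [Finite φ.ker] :
    davenport G ≤ davenport G' * davenport φ.ker := by
  refine Nat.sInf_le fun S hS => ?_
  obtain ⟨P, hPk, hP, hPS⟩ := φ.exists_disjoint_sum_mem_ker _ hS.ge
  obtain ⟨N, hN, hN0, hNsum⟩ := φ.ker.exists_zero_sum_of_davenport_le
    (M := P.map sum) (by simpa using fun T hT => (hP T hT).2) (by simp [hPk])
  obtain ⟨Q, hQP, rfl⟩ := exists_le_map_eq_of_le_map sum hN
  obtain ⟨T, hT⟩ := exists_mem_of_ne_zero (by simpa using hN0)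
  refine ⟨Q.sum, ?_, ?_, ?_⟩
  · obtain ⟨R, rfl⟩ := Multiset.le_iff_exists_add.mp hQP
    exact (sum_add Q R ▸ le_self_add).trans hPS
  · exact fun h => (hP T (mem_of_le hQP hT)).1 (le_zero.mp (h ▸ le_sum_of_mem hT))
  · rwa [← join, sum_join]

end AddMonoidHom

end Davenport

namespace ZMod

/-- `(v, x) ↦ Fin.cons (x mod q) v`. -/
def consCastHom (n q t : ℕ) : (Fin n → ZMod q) × ZMod (q * t) →+ (Fin (n + 1) → ZMod q) :=
  (Fin.consLinearEquiv ℤ fun _ => ZMod q).toAddMonoidHom.comp <|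
    ((castHom (dvd_mul_right q t) (ZMod q)).toAddMonoidHom.comp (.snd _ _)).prod (.fst _ _)

theorem consCastHom_surjective (n q t : ℕ) : Function.Surjective (consCastHom n q t) := by
  refine (Fin.consLinearEquiv ℤ fun _ => ZMod q).surjective.comp fun ⟨y, v⟩ => ?_
  obtain ⟨x, rfl⟩ := castHom_surjective (dvd_mul_right q t) y
  exact ⟨(v, x), rfl⟩

theorem card_ker_consCastHom (n : ℕ) {q : ℕ} (hq : 0 < q) (t : ℕ) :
    Nat.card (consCastHom n q t).ker = t := by
  have h := (consCastHom n q t).card_ker_mul_card_of_surjective (consCastHom_surjective n q t)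
  simp only [Nat.card_prod, Nat.card_fun, Nat.card_zmod, Nat.card_eq_fintype_card,
    Fintype.card_fin] at h
  exact Nat.eq_of_mul_eq_mul_right (pow_pos hq _) (h.trans (by ring))

end ZMod

theorem davenport_lemma3_general (s a t r : ℕ) (hs : 0 < s) (ht : 0 < t)
    (hr : 0 < r) :
    davenport ((Fin (r - 1) → ZMod (s ^ a)) × ZMod (s ^ a * t)) ≤
      davenport (Fin r → ZMod (s ^ a)) * t := by
  obtain ⟨n, rfl⟩ := Nat.exists_eq_add_one_of_ne_zero hr.ne'
  rw [Nat.add_sub_cancel]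
  have hq : 0 < s ^ a := pow_pos hs a
  have : NeZero (s ^ a) := ⟨hq.ne'⟩
  have : NeZero (s ^ a * t) := ⟨(Nat.mul_pos hq ht).ne'⟩
  calc _ ≤ davenport (Fin (n + 1) → ZMod (s ^ a)) * davenport (ZMod.consCastHom n (s ^ a) t).ker :=
        (ZMod.consCastHom n (s ^ a) t).davenport_le_mul_davenport_ker
    _ ≤ _ := Nat.mul_le_mul_left _ <|
      davenport_le_card.trans (ZMod.card_ker_consCastHom n hq t).le

theorem davenport_lemma3 (s a t r : ℕ) (hs : 0 < s) (ha : 0 < a) (ht : 0 < t)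
    (hr : 0 < r) :
    davenport ((Fin (r - 1) → ZMod (s ^ a)) × ZMod (s ^ a * t)) ≤
      davenport (Fin r → ZMod (s ^ a)) * t :=
  davenport_lemma3_general s a t r hs ht hr
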